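/- arXiv:1309.5608 — 3 statements merged into one kernel-verified Lean document; each statement's English description precedes it below -/
import Mathlib

section
/- Let d ≥ 2 and let g : Fin d × Fin d → ℝ be switching costs satisfying g(i,i) = 0, g(i,j) + g(j,i) > 0 for i ≠ j, and g(i,j) + g(j,l) - g(i,l) > 0 for pairwise distinct i, j, l (the no-free-loop condition). Then for any finite sequence of regimes α₀, α₁, ..., α_M with α_{k-1} ≠ α_k, the total undiscounted switching cost satisfies Σ_{k=1}^{M} g(α_{k-1}, α_k) ≥ -max_{j} (-g(α₀, j)), i.e. -Σ_{k=1}^{M} g(α_{k-1}, α_k) ≤ max_j [-g(α₀, j)]. -/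
theorem switching_cost_lower_bound
    (d : ℕ) (hd : 2 ≤ d) (g : Fin d → Fin d → ℝ)
    (hgii : ∀ i, g i i = 0)
    (hgsum : ∀ i j, i ≠ j → 0 < g i j + g j i)
    (hgtri : ∀ i j l, i ≠ j → j ≠ l → i ≠ l → 0 < g i j + g j l - g i l)
    (M : ℕ) (α : ℕ → Fin d) (hα : ∀ k < M, α k ≠ α (k + 1)) :
    -(∑ k ∈ Finset.range M, g (α k) (α (k + 1))) ≤ ⨆ j : Fin d, -g (α 0) j := by
  have key : ∀ N, (∀ k < N, α k ≠ α (k + 1)) →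
      g (α 0) (α N) ≤ ∑ k ∈ Finset.range N, g (α k) (α (k + 1)) := by
    intro N
    induction N with
    | zero => intro _; simp [hgii]
    | succ n ih =>
      intro h
      rw [Finset.sum_range_succ]
      have hn := ih (fun k hk => h k (Nat.lt_succ_of_lt hk))
      have hne : α n ≠ α (n + 1) := h n (Nat.lt_succ_self n)
      by_cases h1 : α 0 = α n
      · have h0 : g (α 0) (α n) = 0 := by rw [h1, hgii]
        rw [h1]; linarith
      · by_cases h2 : α 0 = α (n + 1)
        · have e : g (α n) (α (n + 1)) = g (α n) (α 0) := by rw [← h2]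
          have e2 : g (α 0) (α (n + 1)) = 0 := by rw [← h2, hgii]
          have := hgsum (α 0) (α n) h1
          linarith
        · have := hgtri (α 0) (α n) (α (n + 1)) h1 hne h2
          linarith
  have h1 := key M hα
  have h2 : -g (α 0) (α M) ≤ ⨆ j : Fin d, -g (α 0) j :=
    le_ciSup (Set.Finite.bddAbove (Set.finite_range (fun j : Fin d => -g (α 0) j))) (α M)
  linarith
end

section
/- Let 0 < a₁, let T₁, ..., T_M be an increasing sequence of positive reals, and let g : Fin 2 × Fin 2 → ℝ satisfy g(i,i) = 0 and g(1,2) + g(2,1) > 0 (here regimes are labeled 1,2). Then for any alternating sequence α₀, α₁, ..., α_M in {1,2} with α_{k-1} ≠ α_k, we have -Σ_{k=1}^{M} exp(-a₁ T_k) · g(α_{k-1}, α_k) ≤ max(-g(α₀,1), -g(α₀,2)). -/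
theorem discounted_switching_cost_bound
    (a₁ : ℝ) (ha₁ : 0 < a₁) (M : ℕ) (T : ℕ → ℝ)
    (hTpos : ∀ k, 1 ≤ k → k ≤ M → 0 < T k)
    (hTmono : ∀ k, 1 ≤ k → k < M → T k < T (k + 1))
    (g : Fin 2 → Fin 2 → ℝ)
    (hgii : ∀ i, g i i = 0)
    (hgsum : 0 < g 0 1 + g 1 0)
    (α : ℕ → Fin 2) (hα : ∀ k < M, α k ≠ α (k + 1)) :
    -(∑ k ∈ Finset.range M, Real.exp (-(a₁ * T (k + 1))) * g (α k) (α (k + 1)))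
      ≤ max (-g (α 0) 0) (-g (α 0) 1) := by
  set B : ℝ := min (g (α 0) 0) (g (α 0) 1) with hB
  have htwo : ∀ a : Fin 2, a = 0 ∨ a = 1 := by decide
  have hneq : ∀ a b : Fin 2, a ≠ b → (a = 0 ∧ b = 1) ∨ (a = 1 ∧ b = 0) := by decide
  have hB0 : B ≤ 0 := by
    rcases htwo (α 0) with h | h
    · have h0 : g (α 0) 0 = 0 := by rw [h]; exact hgii 0
      calc B ≤ g (α 0) 0 := min_le_left _ _
        _ = 0 := h0
    · have h0 : g (α 0) 1 = 0 := by rw [h]; exact hgii 1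
      calc B ≤ g (α 0) 1 := min_le_right _ _
        _ = 0 := h0
  -- pair sum fact
  have hpair : ∀ k, k + 1 < M →
      g (α k) (α (k+1)) + g (α (k+1)) (α (k+2)) = g 0 1 + g 1 0 := by
    intro k hk
    have h1 := hα k (by omega)
    have h2 := hα (k+1) hk
    rcases hneq _ _ h1 with ⟨ha, hb⟩ | ⟨ha, hb⟩
    · have hc : α (k+2) = 0 := by
        rcases htwo (α (k+2)) with h | h
        · exact h
        · exact absurd (hb.trans h.symm) h2
      rw [ha, hb, hc]
    · have hc : α (k+2) = 1 := by
        rcases htwo (α (k+2)) with h | h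
        · exact absurd (hb.trans h.symm) h2
        · exact h
      rw [ha, hb, hc]; ring
  have key : ∀ m, m ≤ M → B ≤ ∑ k ∈ Finset.range m,
      Real.exp (-(a₁ * T (k + 1))) * g (α k) (α (k + 1)) := by
    intro m
    induction m using Nat.strong_induction_on with
    | _ m ih =>
      intro hm
      match m with
      | 0 => simpa using hB0
      | 1 =>
        rw [Finset.sum_range_one]
        have hT1 : 0 < T 1 := hTpos 1 le_rfl hm
        have he1 : Real.exp (-(a₁ * T 1)) ≤ 1 := by
          rw [Real.exp_le_one_iff]
          nlinarith
        have hepos : 0 < Real.exp (-(a₁ * T 1)) := Real.exp_pos _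
        have hs0 : B ≤ g (α 0) (α 1) := by
          rcases htwo (α 1) with h | h
          · rw [h]; exact min_le_left _ _
          · rw [h]; exact min_le_right _ _
        rcases le_or_gt 0 (g (α 0) (α 1)) with h | h
        · nlinarith
        · nlinarith
      | (m'' + 2) =>
        rw [Finset.sum_range_succ]
        set t := g (α (m''+1)) (α (m''+2)) with ht
        rcases le_or_gt 0 t with h | h
        · have := ih (m''+1) (by omega) (by omega)
          have hepos : (0:ℝ) < Real.exp (-(a₁ * T (m''+2))) := Real.exp_pos _
          nlinarith
        · rw [Finset.sum_range_succ]
          have hsum := hpair m'' (by omega)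
          have hTm : T (m''+1) < T (m''+2) := hTmono (m''+1) (by omega) (by omega)
          have hemono : Real.exp (-(a₁ * T (m''+2))) ≤ Real.exp (-(a₁ * T (m''+1))) := by
            apply Real.exp_le_exp.mpr
            nlinarith
          have hepos : (0:ℝ) < Real.exp (-(a₁ * T (m''+1))) := Real.exp_pos _
          have := ih m'' (by omega) (by omega)
          nlinarith
  have hmain := key M le_rfl
  rcases le_total (g (α 0) 0) (g (α 0) 1) with h | h
  · have : B = g (α 0) 0 := min_eq_left h
    have hle : -g (α 0) 0 ≤ max (-g (α 0) 0) (-g (α 0) 1) := le_max_left _ _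
    linarith
  · have : B = g (α 0) 1 := min_eq_right h
    have hle : -g (α 0) 1 ≤ max (-g (α 0) 0) (-g (α 0) 1) := le_max_right _ _
    linarith
end

section
/- Let L v(x) = (1/2)σ² x² v''(x) + b x v'(x) with σ > 0, b < a₁, a₁ > 0. Suppose v : (0,∞) → ℝ is twice continuously differentiable, satisfies -L v(x) + a₁ v(x) ≤ 0 for all x ∈ (0,∞), and has at most linear growth: |v(x)| ≤ C(1 + x). Then v(x) ≤ 0 for all x ∈ (0,∞). -/
/-!
Powers are eigenfunctions of the operator: `eulerOp (x ↦ x ^ r) = ψ(r) x ^ r` with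
`ψ(r) = a₁ - b r - σ² r (r - 1) / 2`. Since `ψ(0) = a₁ > 0` and `ψ(1) = a₁ - b > 0`, continuity
gives `q > 1` and `p > 0` with `ψ(q), ψ(-p) > 0`, so `φ = x ^ q + x ^ (-p)` is a strict
supersolution that beats linear growth both at `0` and at `∞`. For `ε > 0` the function `v - ε φ`
is therefore nonpositive near both ends of `(0, ∞)`, and it has no positive interior maximum,
since there `v' = ε φ'` and `v'' ≤ ε φ''` would give `a₁ (v - ε φ) ≤ eulerOp (v - ε φ) < 0`.
Letting `ε → 0` gives `v ≤ 0`.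
-/

open Set Filter Topology

/-- `-L v + a v`, where `L v = ½ σ² x² v'' + b x v'` is the generator of geometric Brownian
motion. -/
noncomputable def eulerOp (σ b a : ℝ) (v : ℝ → ℝ) (x : ℝ) : ℝ :=
  -((1 / 2) * σ ^ 2 * x ^ 2 * deriv (deriv v) x + b * x * deriv v x) + a * v x

noncomputable def indicialPoly (σ b a r : ℝ) : ℝ :=
  a - b * r - σ ^ 2 / 2 * (r * (r - 1))

noncomputable def barrier (q p x : ℝ) : ℝ :=
  x ^ q + x ^ (-p)

theorem IsLocalMax.deriv_deriv_nonpos {f : ℝ → ℝ} {c : ℝ} (h : IsLocalMax f c)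
    (hc : ContinuousAt f c) : deriv (deriv f) c ≤ 0 := by
  by_contra! hpos
  have hconst : f =ᶠ[𝓝 c] fun _ => f c :=
    (h.and (isLocalMin_of_deriv_deriv_pos hpos h.deriv_eq_zero hc)).mono
      fun _ hy => le_antisymm hy.1 hy.2
  have hzero : deriv (deriv f) c = 0 := by simpa using hconst.deriv.deriv_eq
  exact hpos.ne' hzero

theorem ContDiffOn.eventually_differentiableAt {f : ℝ → ℝ} {U : Set ℝ} {x : ℝ}
    {n : WithTop ℕ∞} (hf : ContDiffOn ℝ n f U) (hU : IsOpen U) (hx : x ∈ U) (hn : n ≠ 0) :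
    ∀ᶠ y in 𝓝 x, DifferentiableAt ℝ f y :=
  (hU.eventually_mem hx).mono fun _ hy => (hf.contDiffAt (hU.mem_nhds hy)).differentiableAt hn

theorem ContDiffOn.differentiableAt_deriv {f : ℝ → ℝ} {U : Set ℝ} {x : ℝ}
    (hf : ContDiffOn ℝ 2 f U) (hU : IsOpen U) (hx : x ∈ U) :
    DifferentiableAt ℝ (deriv f) x :=
  ((hf.deriv_of_isOpen hU (m := 1) (by norm_num)).contDiffAt (hU.mem_nhds hx)).differentiableAt
    one_ne_zero

theorem contDiffOn_rpow_const_Ioi (r : ℝ) : ContDiffOn ℝ 2 (fun x : ℝ => x ^ r) (Ioi 0) :=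
  contDiffOn_id.rpow_const_of_ne fun _ hx => ne_of_gt hx

section eulerOp

variable {σ b a : ℝ}

theorem IsLocalMax.mul_le_eulerOp {w : ℝ → ℝ} {c : ℝ} (h : IsLocalMax w c)
    (hc : ContinuousAt w c) : a * w c ≤ eulerOp σ b a w c := by
  have hw'' := h.deriv_deriv_nonpos hc
  rw [eulerOp, h.deriv_eq_zero]
  nlinarith [mul_nonneg (sq_nonneg σ) (sq_nonneg c)]

theorem nonpos_on_Icc_of_eulerOp_neg (ha : 0 ≤ a) {w : ℝ → ℝ} {α β : ℝ}
    (hw : ContinuousOn w (Icc α β)) (hL : ∀ x ∈ Ioo α β, eulerOp σ b a w x < 0)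
    (hα : w α ≤ 0) (hβ : w β ≤ 0) : ∀ x ∈ Icc α β, w x ≤ 0 := by
  intro x hx
  obtain ⟨c, hc, hmax⟩ := isCompact_Icc.exists_isMaxOn ⟨x, hx⟩ hw
  refine (hmax hx).trans (not_lt.1 fun hpos => ?_)
  have hcα : α < c := hc.1.lt_of_ne (by rintro rfl; linarith)
  have hcβ : c < β := hc.2.lt_of_ne (by rintro rfl; linarith)
  have hnhds : Icc α β ∈ 𝓝 c := Icc_mem_nhds hcα hcβ
  have := (hmax.isLocalMax hnhds).mul_le_eulerOp (σ := σ) (b := b) (a := a)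
    (hw.continuousAt hnhds)
  nlinarith [hL c ⟨hcα, hcβ⟩]

theorem eulerOp_add {f g : ℝ → ℝ} {U : Set ℝ} {x : ℝ} (hf : ContDiffOn ℝ 2 f U)
    (hg : ContDiffOn ℝ 2 g U) (hU : IsOpen U) (hx : x ∈ U) :
    eulerOp σ b a (f + g) x = eulerOp σ b a f x + eulerOp σ b a g x := by
  have hderiv : deriv (f + g) =ᶠ[𝓝 x] deriv f + deriv g := by
    filter_upwards [hf.eventually_differentiableAt hU hx two_ne_zero,
      hg.eventually_differentiableAt hU hx two_ne_zero] with y hfy hgy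
    exact deriv_add hfy hgy
  rw [eulerOp, eulerOp, eulerOp, hderiv.deriv_eq, hderiv.eq_of_nhds,
    deriv_add (hf.differentiableAt_deriv hU hx) (hg.differentiableAt_deriv hU hx)]
  simp only [Pi.add_apply]
  ring

theorem eulerOp_const_mul (c : ℝ) (f : ℝ → ℝ) (x : ℝ) :
    eulerOp σ b a (fun y => c * f y) x = c * eulerOp σ b a f x := by
  simp only [eulerOp, deriv_const_mul_field']
  ring

theorem eulerOp_sub {f g : ℝ → ℝ} {U : Set ℝ} {x : ℝ} (hf : ContDiffOn ℝ 2 f U)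
    (hg : ContDiffOn ℝ 2 g U) (hU : IsOpen U) (hx : x ∈ U) :
    eulerOp σ b a (f - g) x = eulerOp σ b a f x - eulerOp σ b a g x := by
  have hfg : f - g = f + fun y => -1 * g y := by
    ext y
    simp only [Pi.sub_apply, Pi.add_apply]
    ring
  rw [hfg, eulerOp_add hf (contDiffOn_const.mul hg) hU hx, eulerOp_const_mul]
  ring

theorem eulerOp_rpow (r : ℝ) {x : ℝ} (hx : x ≠ 0) :
    eulerOp σ b a (fun y => y ^ r) x = indicialPoly σ b a r * x ^ r := by
  simp only [eulerOp, indicialPoly, Real.deriv_rpow_const', deriv_const_mul_field',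
    Real.rpow_sub_one hx]
  field_simp
  ring

theorem exists_indicialPoly_pos_of_one_lt (h : b < a) : ∃ q > 1, 0 < indicialPoly σ b a q := by
  have hev : ∀ᶠ r in 𝓝 1, 0 < indicialPoly σ b a r :=
    continuousAt_const.eventually_lt (by unfold indicialPoly; fun_prop)
      (by simp [indicialPoly, h])
  obtain ⟨q, hq, hq1⟩ := ((hev.filter_mono nhdsWithin_le_nhds).and
    (self_mem_nhdsWithin (s := Ioi 1))).exists
  exact ⟨q, hq1, hq⟩

theorem exists_indicialPoly_neg_pos (h : 0 < a) : ∃ p > 0, 0 < indicialPoly σ b a (-p) := by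
  have hev : ∀ᶠ r in 𝓝 0, 0 < indicialPoly σ b a r :=
    continuousAt_const.eventually_lt (by unfold indicialPoly; fun_prop)
      (by simp [indicialPoly, h])
  obtain ⟨r, hr, hr0⟩ := ((hev.filter_mono nhdsWithin_le_nhds).and
    (self_mem_nhdsWithin (s := Iio 0))).exists
  exact ⟨-r, neg_pos.2 hr0, by rwa [neg_neg]⟩

theorem le_of_eulerOp_nonpos_of_eulerOp_pos (ha : 0 ≤ a) {v φ : ℝ → ℝ}
    (hv : ContDiffOn ℝ 2 v (Ioi 0)) (hφ : ContDiffOn ℝ 2 φ (Ioi 0))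
    (hLv : ∀ x ∈ Ioi (0 : ℝ), eulerOp σ b a v x ≤ 0)
    (hLφ : ∀ x ∈ Ioi (0 : ℝ), 0 < eulerOp σ b a φ x)
    (hzero : ∀ᶠ x in 𝓝[>] 0, v x ≤ φ x) (htop : ∀ᶠ x in atTop, v x ≤ φ x) :
    ∀ x ∈ Ioi (0 : ℝ), v x ≤ φ x := by
  intro x hx
  obtain ⟨α, hvα, hα⟩ := (hzero.and (Ioo_mem_nhdsGT hx)).exists
  obtain ⟨β, hvβ, hβ⟩ := (htop.and (eventually_ge_atTop x)).exists
  have hsub : Icc α β ⊆ Ioi 0 := fun y hy => hα.1.trans_le hy.1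
  have hw : ContDiffOn ℝ 2 (v - φ) (Ioi 0) := hv.sub hφ
  have hL : ∀ y ∈ Ioo α β, eulerOp σ b a (v - φ) y < 0 := fun y hy => by
    have hy0 : y ∈ Ioi (0 : ℝ) := hsub (Ioo_subset_Icc_self hy)
    rw [eulerOp_sub hv hφ isOpen_Ioi hy0]
    linarith [hLv y hy0, hLφ y hy0]
  exact sub_nonpos.1 <| nonpos_on_Icc_of_eulerOp_neg ha (hw.continuousOn.mono hsub) hL
    (sub_nonpos.2 hvα) (sub_nonpos.2 hvβ) x ⟨hα.2.le, hβ⟩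

theorem eulerOp_barrier_pos {q p x : ℝ} (hψq : 0 < indicialPoly σ b a q)
    (hψp : 0 < indicialPoly σ b a (-p)) (hx : 0 < x) : 0 < eulerOp σ b a (barrier q p) x := by
  have hsplit : barrier q p = (fun y => y ^ q) + fun y => y ^ (-p) := rfl
  rw [hsplit, eulerOp_add (contDiffOn_rpow_const_Ioi q)
    (contDiffOn_rpow_const_Ioi (-p)) isOpen_Ioi hx, eulerOp_rpow _ hx.ne',
    eulerOp_rpow _ hx.ne']
  exact add_pos (mul_pos hψq (Real.rpow_pos_of_pos hx _))
    (mul_pos hψp (Real.rpow_pos_of_pos hx _))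

end eulerOp

theorem contDiffOn_barrier (q p : ℝ) : ContDiffOn ℝ 2 (barrier q p) (Ioi 0) :=
  (contDiffOn_rpow_const_Ioi q).add (contDiffOn_rpow_const_Ioi (-p))

theorem barrier_pos (q p : ℝ) {x : ℝ} (hx : 0 < x) : 0 < barrier q p x :=
  add_pos (Real.rpow_pos_of_pos hx _) (Real.rpow_pos_of_pos hx _)

theorem eventually_mul_one_add_le_barrier_nhdsGT_zero (C q : ℝ) {ε p : ℝ} (hε : 0 < ε)
    (hp : 0 < p) : ∀ᶠ x in 𝓝[>] 0, C * (1 + x) ≤ ε * barrier q p x := by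
  filter_upwards [(tendsto_rpow_neg_nhdsGT_zero (neg_lt_zero.2 hp)).eventually_ge_atTop
    (2 * |C| / ε), Ioo_mem_nhdsGT one_pos] with x hx hx1
  calc C * (1 + x) ≤ |C| * 2 := by nlinarith [le_abs_self C, abs_nonneg C, hx1.1, hx1.2]
    _ = ε * (2 * |C| / ε) := by field_simp
    _ ≤ ε * x ^ (-p) := by gcongr
    _ ≤ ε * barrier q p x := by
        have := Real.rpow_pos_of_pos hx1.1 q
        rw [barrier]
        nlinarith

theorem eventually_mul_one_add_le_barrier_atTop (C p : ℝ) {ε q : ℝ} (hε : 0 < ε) (hq : 1 < q) :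
    ∀ᶠ x in atTop, C * (1 + x) ≤ ε * barrier q p x := by
  filter_upwards [(tendsto_rpow_atTop (sub_pos.2 hq)).eventually_ge_atTop (2 * |C| / ε),
    eventually_ge_atTop 1] with x hx hx1
  calc C * (1 + x) ≤ 2 * |C| * x := by nlinarith [le_abs_self C, abs_nonneg C]
    _ = ε * (2 * |C| / ε) * x := by field_simp
    _ ≤ ε * x ^ (q - 1) * x := by gcongr
    _ = ε * x ^ q := by
        rw [Real.rpow_sub_one (by positivity)]
        field_simp
    _ ≤ ε * barrier q p x := by
        have := Real.rpow_pos_of_pos (zero_lt_one.trans_le hx1) (-p)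
        rw [barrier]
        nlinarith

theorem comparison_principle_subsolution_general
    (σ b a₁ : ℝ) (hba : b < a₁) (ha₁ : 0 < a₁)
    (v : ℝ → ℝ) (hv : ContDiffOn ℝ 2 v (Ioi 0))
    (hsub : ∀ x ∈ Ioi (0 : ℝ),
      -((1 / 2) * σ ^ 2 * x ^ 2 * deriv (deriv v) x + b * x * deriv v x) + a₁ * v x ≤ 0)
    (C : ℝ) (hgrowth : ∀ x ∈ Ioi (0 : ℝ), |v x| ≤ C * (1 + x)) :
    ∀ x ∈ Ioi (0 : ℝ), v x ≤ 0 := by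
  obtain ⟨q, hq, hψq⟩ := exists_indicialPoly_pos_of_one_lt (σ := σ) hba
  obtain ⟨p, hp, hψp⟩ := exists_indicialPoly_neg_pos (σ := σ) (b := b) ha₁
  have hvC : ∀ x ∈ Ioi (0 : ℝ), v x ≤ C * (1 + x) := fun x hx =>
    (le_abs_self _).trans (hgrowth x hx)
  have hbound : ∀ ε > 0, ∀ x ∈ Ioi (0 : ℝ), v x ≤ ε * barrier q p x := fun ε hε =>
    le_of_eulerOp_nonpos_of_eulerOp_pos ha₁.le hv ((contDiffOn_barrier q p).const_smul ε) hsub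
      (fun x hx => by
        rw [eulerOp_const_mul]
        exact mul_pos hε (eulerOp_barrier_pos hψq hψp hx))
      (by
        filter_upwards [eventually_mul_one_add_le_barrier_nhdsGT_zero C q hε hp,
          self_mem_nhdsWithin] with x hx hx0 using (hvC x hx0).trans hx)
      (by
        filter_upwards [eventually_mul_one_add_le_barrier_atTop C p hε hq,
          eventually_gt_atTop 0] with x hx hx0 using (hvC x hx0).trans hx)
  intro x hx
  have hφx := barrier_pos q p hx
  refine le_of_forall_pos_le_add fun δ hδ => ?_
  simpa [div_mul_cancel₀ _ hφx.ne'] using hbound (δ / barrier q p x) (div_pos hδ hφx) x hx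

theorem comparison_principle_subsolution
    (σ b a₁ : ℝ) (hσ : 0 < σ) (hba : b < a₁) (ha₁ : 0 < a₁)
    (v : ℝ → ℝ) (hv : ContDiffOn ℝ 2 v (Ioi 0))
    (hsub : ∀ x ∈ Ioi (0 : ℝ),
      -((1 / 2) * σ ^ 2 * x ^ 2 * deriv (deriv v) x + b * x * deriv v x) + a₁ * v x ≤ 0)
    (C : ℝ) (hgrowth : ∀ x ∈ Ioi (0 : ℝ), |v x| ≤ C * (1 + x)) :
    ∀ x ∈ Ioi (0 : ℝ), v x ≤ 0 :=
  comparison_principle_subsolution_general σ b a₁ hba ha₁ v hv hsub C hgrowth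
end
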